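/- Let p ≥ 2 (this encodes 𝔥 = 𝔰𝔭_p(ℂ) ⊂ 𝔰𝔩_{2p}(ℂ) ⊂ 𝔤 = 𝔰𝔬_{4p}(ℂ)). For a ∈ ℝ^p write a ⌢ a ∈ ℝ^{2p} for the tuple (a_1, …, a_p, a_1, …, a_p). Then: (I) 2ρ_C(a) ≤ ρ_D(a ⌢ a) holds for all a ∈ ℝ^p; (II) [for all nonzero a ∈ ℝ^p: 2ρ_C(a) < ρ_D(a ⌢ a)] if and only if p ≥ 3; (III) if p = 2, then for a = (a_1, a_2) equality 2ρ_C(a) = ρ_D(a ⌢ a) holds if and only if |a_1| = |a_2|. -/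
import Mathlib


open Finset

/-- `ρ_A(c) = Σ_{i<j} |c_i - c_j|`, written in the permutation-invariant
symmetric form `(1/2) Σ_{i,j} |c_i - c_j|`. -/
noncomputable def rhoA {ι : Type*} [Fintype ι] (c : ι → ℝ) : ℝ :=
  (∑ i, ∑ j, |c i - c j|) / 2

/-- `ρ_B(c) = Σ_{i<j} (|c_i - c_j| + |c_i + c_j|) + Σ_i |c_i|`, written in the
permutation-invariant symmetric form `(1/2) Σ_{i,j} (|c_i - c_j| + |c_i + c_j|)`. -/
noncomputable def rhoB {ι : Type*} [Fintype ι] (c : ι → ℝ) : ℝ :=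
  (∑ i, ∑ j, (|c i - c j| + |c i + c j|)) / 2

/-- `ρ_D(c) = Σ_{i<j} (|c_i - c_j| + |c_i + c_j|) = ρ_B(c) - Σ_i |c_i|`. -/
noncomputable def rhoD {ι : Type*} [Fintype ι] (c : ι → ℝ) : ℝ :=
  rhoB c - ∑ i, |c i|

/-- `ρ_C(c) = Σ_{i<j} (|c_i - c_j| + |c_i + c_j|) + 2 Σ_i |c_i| = ρ_B(c) + Σ_i |c_i|`. -/
noncomputable def rhoC {ι : Type*} [Fintype ι] (c : ι → ℝ) : ℝ :=
  rhoB c + ∑ i, |c i|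

/-- `ρ_{SO_n}` is `ρ_D` for even `n` and `ρ_B` for odd `n`. -/
noncomputable def rhoSO (n : ℕ) {ι : Type*} [Fintype ι] (c : ι → ℝ) : ℝ :=
  if Even n then rhoD c else rhoB c

lemma aux_l1 (x y : ℝ) : |x| + |y| ≤ |x - y| + |x + y| := by
  have h1 := abs_add_le (x - y) (x + y)
  have h2 := abs_add_le (x + y) (y - x)
  have e1 : x - y + (x + y) = 2 * x := by ring
  have e2 : x + y + (y - x) = 2 * y := by ring
  rw [e1] at h1
  rw [e2] at h2
  have e3 : |(2:ℝ) * x| = 2 * |x| := by rw [abs_mul]; norm_num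
  have e4 : |(2:ℝ) * y| = 2 * |y| := by rw [abs_mul]; norm_num
  have e5 : |y - x| = |x - y| := abs_sub_comm _ _
  rw [e3] at h1; rw [e4, e5] at h2
  linarith

lemma aux_l2 (x y : ℝ) : |x - y| + |x + y| = 2 * max |x| |y| := by
  rcases abs_cases (x - y) with ⟨h1, h1'⟩ | ⟨h1, h1'⟩ <;>
  rcases abs_cases (x + y) with ⟨h2, h2'⟩ | ⟨h2, h2'⟩ <;>
  rcases abs_cases x with ⟨h3, h3'⟩ | ⟨h3, h3'⟩ <;>
  rcases abs_cases y with ⟨h4, h4'⟩ | ⟨h4, h4'⟩ <;>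
  rcases max_cases |x| |y| with ⟨h5, h5'⟩ | ⟨h5, h5'⟩ <;>
  linarith

lemma aux_card_mul_le {ι : Type*} [Fintype ι] (a : ι → ℝ) :
    (Fintype.card ι : ℝ) * ∑ i, |a i| ≤ rhoB a := by
  unfold rhoB
  have h : ∀ i : ι, (Fintype.card ι : ℝ) * |a i| + ∑ j, |a j|
      ≤ ∑ j, (|a i - a j| + |a i + a j|) := by
    intro i
    have h0 : ∑ j, (|a i| + |a j|) ≤ ∑ j, (|a i - a j| + |a i + a j|) :=
      Finset.sum_le_sum fun j _ => aux_l1 (a i) (a j)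
    calc (Fintype.card ι : ℝ) * |a i| + ∑ j, |a j|
        = ∑ j, (|a i| + |a j|) := by
          rw [Finset.sum_add_distrib, Finset.sum_const, card_univ, nsmul_eq_mul]
      _ ≤ _ := h0
  have h2 : ∑ i : ι, ((Fintype.card ι : ℝ) * |a i| + ∑ j, |a j|)
      ≤ ∑ i, ∑ j, (|a i - a j| + |a i + a j|) :=
    Finset.sum_le_sum fun i _ => h i
  have h3 : ∑ i : ι, ((Fintype.card ι : ℝ) * |a i| + ∑ j, |a j|)
      = (Fintype.card ι : ℝ) * ∑ i, |a i| + (Fintype.card ι : ℝ) * ∑ i, |a i| := by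
    rw [Finset.sum_add_distrib, ← Finset.mul_sum, Finset.sum_const, card_univ, nsmul_eq_mul]
  rw [h3] at h2
  linarith

lemma aux_elim_eq {ι : Type*} [Fintype ι] (a : ι → ℝ) :
    rhoD (Sum.elim a a) = 4 * rhoB a - 2 * ∑ i, |a i| := by
  unfold rhoD rhoB
  simp only [Fintype.sum_sum_type, Sum.elim_inl, Sum.elim_inr, Finset.sum_add_distrib]
  ring

lemma aux_S_nonneg {ι : Type*} [Fintype ι] (a : ι → ℝ) : 0 ≤ ∑ i, |a i| :=
  Finset.sum_nonneg fun i _ => abs_nonneg _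

lemma aux_fin2 (a : Fin 2 → ℝ) :
    rhoB a = |a 0| + |a 1| + 2 * max |a 0| |a 1| := by
  unfold rhoB
  rw [Fin.sum_univ_two, Fin.sum_univ_two, Fin.sum_univ_two]
  have e1 : |a 1 - a 0| = |a 0 - a 1| := abs_sub_comm _ _
  have e2 : |a 1 + a 0| = |a 0 + a 1| := by rw [add_comm]
  have e3 : |a 0 + a 0| = 2 * |a 0| := by rw [← two_mul, abs_mul]; norm_num
  have e4 : |a 1 + a 1| = 2 * |a 1| := by rw [← two_mul, abs_mul]; norm_num
  have e5 := aux_l2 (a 0) (a 1)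
  rw [e1, e2, e3, e4]
  simp only [sub_self, abs_zero]
  linarith

/-- Benoist–Kobayashi inequalities for `𝔥 = 𝔰𝔭_p ⊂ 𝔰𝔩_{2p} ⊂ 𝔤 = 𝔰𝔬_{4p}`. -/
theorem stmt17 (p : ℕ) (hp : 2 ≤ p) :
    (∀ a : Fin p → ℝ, 2 * rhoC a ≤ rhoD (Sum.elim a a)) ∧
    ((∀ a : Fin p → ℝ, a ≠ 0 → 2 * rhoC a < rhoD (Sum.elim a a)) ↔ 3 ≤ p) ∧
    (∀ h : p = 2, ∀ a : Fin p → ℝ,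
        (2 * rhoC a = rhoD (Sum.elim a a) ↔
          |a ⟨0, by omega⟩| = |a ⟨1, by omega⟩|)) := by
  have part3 : ∀ h : p = 2, ∀ a : Fin p → ℝ,
      (2 * rhoC a = rhoD (Sum.elim a a) ↔
        |a ⟨0, by omega⟩| = |a ⟨1, by omega⟩|) := by
    intro h
    subst h
    intro a
    have h0 : a ⟨0, by omega⟩ = a 0 := rfl
    have h1 : a ⟨1, by omega⟩ = a 1 := rfl
    rw [h0, h1]
    have hE := aux_elim_eq a
    have hB := aux_fin2 a
    have hS : ∑ i, |a i| = |a 0| + |a 1| := Fin.sum_univ_two _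
    rw [hE]
    unfold rhoC
    rw [hS] at *
    constructor
    · intro heq
      rcases max_cases |a 0| |a 1| with ⟨h5, h5'⟩ | ⟨h5, h5'⟩ <;> linarith
    · intro heq
      rcases max_cases |a 0| |a 1| with ⟨h5, h5'⟩ | ⟨h5, h5'⟩ <;> linarith
  refine ⟨?_, ⟨?_, ?_⟩, part3⟩
  · intro a
    have hE := aux_elim_eq a
    have hC := aux_card_mul_le a
    rw [Fintype.card_fin] at hC
    have hS := aux_S_nonneg a
    have hp' : (2 : ℝ) ≤ (p : ℕ) := by exact_mod_cast hp
    have h2 : 2 * ∑ i, |a i| ≤ (p : ℝ) * ∑ i, |a i| :=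
      mul_le_mul_of_nonneg_right hp' hS
    unfold rhoC
    linarith
  · intro hstrict
    by_contra hlt
    have hp2 : p = 2 := by omega
    have heq := (part3 hp2 (fun _ => 1)).mpr (by norm_num)
    exact absurd heq (ne_of_lt (hstrict (fun _ => 1) (by
      intro h
      have := congrFun h ⟨0, by omega⟩
      norm_num at this)))
  · intro hp3 a ha
    have hE := aux_elim_eq a
    have hC := aux_card_mul_le a
    rw [Fintype.card_fin] at hC
    have hS := aux_S_nonneg a
    have hSpos : 0 < ∑ i, |a i| := by
      rcases lt_or_eq_of_le hS with h | h
      · exact h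
      · exfalso
        apply ha
        funext i
        have h0 : ∀ j ∈ (univ : Finset (Fin p)), |a j| = 0 := by
          intro j _
          have := (Finset.sum_eq_zero_iff_of_nonneg
            (fun j _ => abs_nonneg (a j))).mp h.symm j (mem_univ j)
          exact this
        have := h0 i (mem_univ i)
        simpa using abs_eq_zero.mp this
    have hp' : (3 : ℝ) ≤ (p : ℕ) := by exact_mod_cast hp3
    have h3 : 3 * ∑ i, |a i| ≤ (p : ℝ) * ∑ i, |a i| :=
      mul_le_mul_of_nonneg_right hp' hS
    unfold rhoC
    linarith
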